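/- arXiv:2605.07842 — 3 statements merged into one kernel-verified Lean document; each statement's English description precedes it below -/
import Mathlib

section
/- Let β, σ > 0, let c ∈ ℓ^∞(ℤ) be a complex sequence, and for x ∈ ℝ and ℓ ∈ ℤ define r_ℓ := ∑_{n ∈ ℤ} c_n · conj(c_{n+ℓ}) · e^{−(x−βn)²/(4σ²)} · e^{−(x−β(n+ℓ))²/(4σ²)}. Then the series converges absolutely and |r_ℓ| ≤ ‖c‖_∞² · (1 + σ√(2π)/β) · e^{−β²ℓ²/(8σ²)}. -/
/-!
Completing the square, the product of the two Gaussian weights is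
`exp (-β²ℓ²/(8σ²)) · exp (-(β²/(2σ²)) (n - t)²)` with `t = (x - βℓ/2)/β`, so after bounding
`|c n| |c (n + ℓ)|` by `M²` it remains to bound a shifted Gaussian sum over `ℤ`. For a function
that decreases with the distance to `t`, every integer other than the one nearest to `t` is dominated
by the integral over the adjacent unit interval on the side of `t`, giving
`∑ₙ exp (-a (n - t)²) ≤ 1 + ∫ exp (-a y²) dy = 1 + √(π/a)`.
-/

open MeasureTheory Real Finset Set

theorem sum_int_le_apply_add_integral {f : ℝ → ℝ} {t : ℝ} (hf_nonneg : 0 ≤ f)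
    (hf_int : Integrable f) (hf_anti : ∀ y z, |y - t| ≤ |z - t| → f z ≤ f y) (s : Finset ℤ) :
    ∑ n ∈ s, f n ≤ f t + ∫ y, f y := by
  set n₀ : ℤ := round t
  have hround : |t - n₀| ≤ 1 / 2 := abs_sub_round t
  -- `Ioc (l n) (l n + 1)` is the unit interval between `n` and `n₀` that has `n` as an endpoint
  set l : ℤ → ℤ := fun n => if n₀ < n then n - 1 else n
  have hl_inj : InjOn l ↑(s.erase n₀) := by
    intro n hn m hm hnm
    simp only [coe_erase, mem_sdiff, mem_coe, mem_singleton_iff, l] at hn hm hnm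
    split_ifs at hnm <;> omega
  have hl_near : ∀ n ≠ n₀, ∀ y ∈ Ioc (l n : ℝ) (l n + 1), |y - t| ≤ |n - t| := by
    intro n hn y ⟨hy₁, hy₂⟩
    have := abs_le.1 hround
    rcases lt_or_gt_of_ne hn with h | h
    · have h' : (n : ℝ) + 1 ≤ n₀ := by exact_mod_cast h
      simp only [l, not_lt.2 h.le, if_false] at hy₁ hy₂
      rw [abs_le, abs_of_neg (by linarith)]
      constructor <;> linarith
    · have h' : (n₀ : ℝ) + 1 ≤ n := by exact_mod_cast h
      simp only [l, h, if_true, Int.cast_sub, Int.cast_one] at hy₁ hy₂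
      rw [abs_le, abs_of_pos (by linarith)]
      constructor <;> linarith
  have hterm : ∀ n ≠ n₀, f n ≤ ∫ y in Ioc (l n : ℝ) (l n + 1), f y := by
    intro n hn
    calc f n = ∫ _ in Ioc (l n : ℝ) (l n + 1), f n := by simp
      _ ≤ ∫ y in Ioc (l n : ℝ) (l n + 1), f y :=
        setIntegral_mono_on (integrableOn_const (by simp)) hf_int.integrableOn
          measurableSet_Ioc fun y hy => hf_anti y n (hl_near n hn y hy)
  calc ∑ n ∈ s, f n ≤ ∑ n ∈ insert n₀ (s.erase n₀), f n :=
        sum_le_sum_of_subset_of_nonneg (insert_erase_subset _ _) fun n _ _ => hf_nonneg n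
    _ = f n₀ + ∑ n ∈ s.erase n₀, f n := sum_insert (notMem_erase _ _)
    _ ≤ f t + ∑ n ∈ s.erase n₀, ∫ y in Ioc (l n : ℝ) (l n + 1), f y := by
        gcongr with n hn
        · exact hf_anti _ _ (by simp)
        · exact hterm n (ne_of_mem_erase hn)
    _ = f t + ∑ k ∈ (s.erase n₀).image l, ∫ y in Ioc (k : ℝ) (k + 1), f y := by
        rw [sum_image hl_inj]
    _ = f t + ∫ y in ⋃ k ∈ (s.erase n₀).image l, Ioc (k : ℝ) (k + 1), f y := by
        rw [integral_biUnion_finset _ (fun _ _ => measurableSet_Ioc)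
          ((pairwise_disjoint_Ioc_intCast ℝ).set_pairwise _) fun _ _ => hf_int.integrableOn]
    _ ≤ f t + ∫ y, f y :=
        add_le_add_right (setIntegral_le_integral hf_int (.of_forall hf_nonneg)) _

theorem sum_int_exp_neg_mul_sq_le {a : ℝ} (ha : 0 < a) (t : ℝ) (s : Finset ℤ) :
    ∑ n ∈ s, exp (-a * ((n : ℝ) - t) ^ 2) ≤ 1 + √(π / a) := by
  have hint : Integrable fun y : ℝ => exp (-a * (y - t) ^ 2) :=
    (integrable_exp_neg_mul_sq ha).comp_sub_right t
  have hanti : ∀ y z : ℝ, |y - t| ≤ |z - t| → exp (-a * (z - t) ^ 2) ≤ exp (-a * (y - t) ^ 2) := by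
    intro y z h
    have := sq_le_sq.2 h
    exact exp_le_exp.2 (by nlinarith)
  calc ∑ n ∈ s, exp (-a * ((n : ℝ) - t) ^ 2)
      ≤ exp (-a * (t - t) ^ 2) + ∫ y, exp (-a * (y - t) ^ 2) :=
        sum_int_le_apply_add_integral (fun _ => (exp_pos _).le) hint hanti s
    _ = 1 + √(π / a) := by
        rw [integral_sub_right_eq_self (fun y => exp (-a * y ^ 2)), integral_gaussian]
        simp

theorem summable_int_exp_neg_mul_sq {a : ℝ} (ha : 0 < a) (t : ℝ) :
    Summable fun n : ℤ => exp (-a * ((n : ℝ) - t) ^ 2) :=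
  summable_of_sum_le (fun _ => (exp_pos _).le) (sum_int_exp_neg_mul_sq_le ha t)

theorem tsum_int_exp_neg_mul_sq_le {a : ℝ} (ha : 0 < a) (t : ℝ) :
    ∑' n : ℤ, exp (-a * ((n : ℝ) - t) ^ 2) ≤ 1 + √(π / a) :=
  (summable_int_exp_neg_mul_sq ha t).tsum_le_of_sum_le (sum_int_exp_neg_mul_sq_le ha t)

theorem exp_mul_exp_eq_exp_mul_gaussian {β σ : ℝ} (hβ : β ≠ 0) (hσ : σ ≠ 0) (x y z : ℝ) :
    exp (-((x - β * y) ^ 2 / (4 * σ ^ 2))) * exp (-((x - β * (y + z)) ^ 2 / (4 * σ ^ 2))) =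
      exp (-(β ^ 2 * z ^ 2 / (8 * σ ^ 2))) *
        exp (-(β ^ 2 / (2 * σ ^ 2)) * (y - (x - β * z / 2) / β) ^ 2) := by
  rw [← exp_add, ← exp_add]
  congr 1
  field_simp
  ring

theorem sqrt_pi_div_gaussian_rate {β σ : ℝ} (hβ : 0 < β) (hσ : 0 < σ) :
    √(π / (β ^ 2 / (2 * σ ^ 2))) = σ * √(2 * π) / β := by
  rw [show π / (β ^ 2 / (2 * σ ^ 2)) = (σ / β) ^ 2 * (2 * π) by field_simp,
    sqrt_mul (by positivity), sqrt_sq (by positivity)]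
  ring

theorem norm_mul_conj_mul_exp_mul_exp_le {β σ M : ℝ} (hβ : β ≠ 0) (hσ : σ ≠ 0) {c : ℤ → ℂ}
    (hM : ∀ n, ‖c n‖ ≤ M) (x : ℝ) (ℓ n : ℤ) :
    ‖c n * (starRingEnd ℂ) (c (n + ℓ)) *
        (exp (-((x - β * (n : ℝ)) ^ 2 / (4 * σ ^ 2))) : ℝ) *
        (exp (-((x - β * ((n : ℝ) + (ℓ : ℝ))) ^ 2 / (4 * σ ^ 2))) : ℝ)‖ ≤
      M ^ 2 * exp (-(β ^ 2 * (ℓ : ℝ) ^ 2 / (8 * σ ^ 2))) *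
        exp (-(β ^ 2 / (2 * σ ^ 2)) * ((n : ℝ) - (x - β * ℓ / 2) / β) ^ 2) := by
  have hcc : ‖c n‖ * ‖c (n + ℓ)‖ ≤ M ^ 2 := by
    rw [sq]
    exact mul_le_mul (hM n) (hM _) (norm_nonneg _) ((norm_nonneg _).trans (hM n))
  rw [mul_assoc, norm_mul, ← Complex.ofReal_mul, Complex.norm_real, norm_mul,
    Complex.norm_conj, exp_mul_exp_eq_exp_mul_gaussian hβ hσ, Real.norm_eq_abs,
    abs_of_pos (by positivity), mul_assoc (M ^ 2)]
  gcongr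

theorem autocorrelation_coeff_bound (β σ x : ℝ) (hβ : 0 < β) (hσ : 0 < σ)
    (c : ℤ → ℂ) (M : ℝ) (hM : ∀ n : ℤ, ‖c n‖ ≤ M) (ℓ : ℤ) :
    Summable (fun n : ℤ => ‖c n * (starRingEnd ℂ) (c (n + ℓ)) *
        (Real.exp (-((x - β * (n : ℝ)) ^ 2 / (4 * σ ^ 2))) : ℝ) *
        (Real.exp (-((x - β * ((n : ℝ) + (ℓ : ℝ))) ^ 2 / (4 * σ ^ 2))) : ℝ)‖) ∧
    ‖∑' n : ℤ, c n * (starRingEnd ℂ) (c (n + ℓ)) *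
        (Real.exp (-((x - β * (n : ℝ)) ^ 2 / (4 * σ ^ 2))) : ℝ) *
        (Real.exp (-((x - β * ((n : ℝ) + (ℓ : ℝ))) ^ 2 / (4 * σ ^ 2))) : ℝ)‖ ≤
      M ^ 2 * (1 + σ * Real.sqrt (2 * Real.pi) / β) *
        Real.exp (-(β ^ 2 * (ℓ : ℝ) ^ 2 / (8 * σ ^ 2))) := by
  set a := β ^ 2 / (2 * σ ^ 2)
  set t := (x - β * ℓ / 2) / β
  set E := exp (-(β ^ 2 * (ℓ : ℝ) ^ 2 / (8 * σ ^ 2)))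
  have ha : 0 < a := by positivity
  have hbound := norm_mul_conj_mul_exp_mul_exp_le hβ.ne' hσ.ne' hM x ℓ
  have hg := (summable_int_exp_neg_mul_sq ha t).mul_left (M ^ 2 * E)
  refine ⟨hg.of_nonneg_of_le (fun _ => norm_nonneg _) hbound, ?_⟩
  calc _ ≤ ∑' n : ℤ, M ^ 2 * E * exp (-a * ((n : ℝ) - t) ^ 2) :=
        tsum_of_norm_bounded hg.hasSum hbound
    _ = M ^ 2 * E * ∑' n : ℤ, exp (-a * ((n : ℝ) - t) ^ 2) := tsum_mul_left
    _ ≤ M ^ 2 * E * (1 + √(π / a)) := by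
        gcongr
        exact tsum_int_exp_neg_mul_sq_le ha t
    _ = M ^ 2 * (1 + σ * √(2 * π) / β) * E := by
        rw [sqrt_pi_div_gaussian_rate hβ hσ]
        ring
end

section
/- Let f, g : ℝ → ℂ, p ∈ ℝ with f(p) ≠ 0 and g(p) ≠ 0, and suppose ||f(p)|² − |g(p)|²| ≤ B and, for all ξ with |ξ| ≤ r, |f(p+ξ)·conj(f(p)) − g(p+ξ)·conj(g(p))| ≤ B' . Then with τ := conj(g(p))·|f(p)| / (|g(p)|·conj(f(p))) ∈ 𝕋, for every |ξ| ≤ r one has |f(p+ξ) − τ·g(p+ξ)| ≤ (1/|g(p)|)·( B·|f(p+ξ)|/(|f(p)| + |g(p)|) + B' ). -/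
/-!
Multiplying `f (p + ξ) - τ g (p + ξ)` by `‖g p‖ conj (f p)` gives
`‖f p‖ (f (p + ξ) conj (f p) - g (p + ξ) conj (g p)) + f (p + ξ) conj (f p) (‖g p‖ - ‖f p‖)`:
the first term is controlled by `B'`, the second by `B` through
`|‖f p‖ - ‖g p‖| = |‖f p‖² - ‖g p‖²| / (‖f p‖ + ‖g p‖)`.
-/

open ComplexConjugate

theorem abs_sub_le_div_of_abs_sq_sub_sq_le {x y B : ℝ} (hxy : 0 < x + y)
    (h : |x ^ 2 - y ^ 2| ≤ B) : |x - y| ≤ B / (x + y) := by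
  rwa [le_div_iff₀ hxy, ← abs_of_pos hxy, ← abs_mul, mul_comm, ← sq_sub_sq]

section
variable {𝕜 : Type*} [RCLike 𝕜]

theorem sub_phase_mul_eq {a b : 𝕜} (ha : a ≠ 0) (hb : b ≠ 0) (F G : 𝕜) :
    F - conj b * (‖a‖ : 𝕜) / ((‖b‖ : 𝕜) * conj a) * G
      = ((‖a‖ : 𝕜) * (F * conj a - G * conj b) + F * conj a * ((‖b‖ - ‖a‖ : ℝ) : 𝕜))
        / ((‖b‖ : 𝕜) * conj a) := by
  have : conj a ≠ 0 := by simpa using ha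
  have : (‖b‖ : 𝕜) ≠ 0 := by simpa using hb
  push_cast
  field_simp
  ring

theorem norm_sub_phase_mul_le {a b : 𝕜} (ha : a ≠ 0) (hb : b ≠ 0) (F G : 𝕜) :
    ‖F - conj b * (‖a‖ : 𝕜) / ((‖b‖ : 𝕜) * conj a) * G‖
      ≤ (‖F‖ * |‖a‖ - ‖b‖| + ‖F * conj a - G * conj b‖) / ‖b‖ := by
  have ha' : 0 < ‖a‖ := norm_pos_iff.mpr ha
  rw [sub_phase_mul_eq ha hb, norm_div, norm_mul, RCLike.norm_conj, RCLike.norm_ofReal,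
    abs_norm, mul_comm ‖b‖, ← div_div]
  gcongr
  rw [div_le_iff₀ ha']
  calc _ ≤ ‖(‖a‖ : 𝕜) * (F * conj a - G * conj b)‖ + ‖F * conj a * ((‖b‖ - ‖a‖ : ℝ) : 𝕜)‖ :=
        norm_add_le _ _
    _ = ‖a‖ * ‖F * conj a - G * conj b‖ + ‖F‖ * ‖a‖ * |‖a‖ - ‖b‖| := by
        rw [norm_mul, norm_mul, norm_mul, RCLike.norm_ofReal, RCLike.norm_ofReal, RCLike.norm_conj,
          abs_norm, abs_sub_comm]
    _ = _ := by ring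
end

theorem local_stability_core_general (f g : ℝ → ℂ) (p r B B' : ℝ)
    (hf : f p ≠ 0) (hg : g p ≠ 0)
    (h1 : |‖f p‖ ^ 2 - ‖g p‖ ^ 2| ≤ B)
    (h2 : ∀ ξ : ℝ, |ξ| ≤ r →
      ‖f (p + ξ) * (starRingEnd ℂ) (f p) - g (p + ξ) * (starRingEnd ℂ) (g p)‖ ≤ B') :
    ∀ ξ : ℝ, |ξ| ≤ r →
      ‖f (p + ξ) -
          ((starRingEnd ℂ) (g p) * (‖f p‖ : ℂ) /
            ((‖g p‖ : ℂ) * (starRingEnd ℂ) (f p))) * g (p + ξ)‖ ≤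
        (1 / ‖g p‖) *
          (B * ‖f (p + ξ)‖ / (‖f p‖ + ‖g p‖) + B') := by
  intro ξ hξ
  have hsum : 0 < ‖f p‖ + ‖g p‖ := by positivity
  have hnorm := abs_sub_le_div_of_abs_sq_sub_sq_le hsum h1
  calc _ ≤ (‖f (p + ξ)‖ * |‖f p‖ - ‖g p‖| + ‖f (p + ξ) * conj (f p) - g (p + ξ) * conj (g p)‖)
          / ‖g p‖ := norm_sub_phase_mul_le (𝕜 := ℂ) hf hg _ _
    _ ≤ (‖f (p + ξ)‖ * (B / (‖f p‖ + ‖g p‖)) + B') / ‖g p‖ := by gcongr; exact h2 ξ hξ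
    _ = _ := by ring

theorem local_stability_core (f g : ℝ → ℂ) (p r B B' : ℝ) (hr : 0 < r)
    (hB : 0 ≤ B) (hB' : 0 ≤ B') (hf : f p ≠ 0) (hg : g p ≠ 0)
    (h1 : |‖f p‖ ^ 2 - ‖g p‖ ^ 2| ≤ B)
    (h2 : ∀ ξ : ℝ, |ξ| ≤ r →
      ‖f (p + ξ) * (starRingEnd ℂ) (f p) - g (p + ξ) * (starRingEnd ℂ) (g p)‖ ≤ B') :
    ∀ ξ : ℝ, |ξ| ≤ r →
      ‖f (p + ξ) -
          ((starRingEnd ℂ) (g p) * (‖f p‖ : ℂ) /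
            ((‖g p‖ : ℂ) * (starRingEnd ℂ) (f p))) * g (p + ξ)‖ ≤
        (1 / ‖g p‖) *
          (B * ‖f (p + ξ)‖ / (‖f p‖ + ‖g p‖) + B') :=
  local_stability_core_general f g p r B B' hf hg h1 h2
end

section
/- Fix c ∈ (0,1). The Jacobi theta function ϑ₃(z, c) = ∑_{n∈ℤ} c^{n²} e^{2niz} restricted to real z is π-periodic, real-valued, and satisfies 0 < ϑ₃(π/2, c) ≤ ϑ₃(z, c) ≤ ϑ₃(0, c) for all z ∈ ℝ. -/
/-!
Write `ϑ(x, t) = ∑ₙ e^{-πtn²} cos(2πnx)` for Mathlib's `jacobiTheta₂ x (t * I)`, with nome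
`q = e^{-πt}`.
Splitting the Cauchy product of `ϑ(x, t) ϑ(x + 1/2, t)` according to the parity of `m + n`
gives the duplication formula `ϑ(x, t) ϑ(x + 1/2, t) = ϑ(2x + 1/2, 2t) ϑ(1/2, 2t)`.
If `ϑ(·, 2t)` attains a positive minimum at `1/2`, the right side is at least
`ϑ(1/2, 2t)² = ϑ(0, t) ϑ(1/2, t)`; hence `ϑ(·, t)` never vanishes, so is positive, and dividing
by `ϑ(x + 1/2, t) ≤ ϑ(0, t)` shows that `ϑ(·, t)` has its minimum at `1/2` too. For `q ≤ 1/4` both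
facts follow directly from the cosine series, and squaring the nome often enough reaches that range.
-/

open Real
open Complex (I)

namespace JacobiTheta

lemma jacobiTheta₂_term_add_mul_term_sub (a b : ℤ) (z τ : ℂ) :
    jacobiTheta₂_term (a + b) z τ * jacobiTheta₂_term (a - b) (z + 1 / 2) τ =
      jacobiTheta₂_term a (2 * z + 1 / 2) (2 * τ) * jacobiTheta₂_term b (1 / 2) (2 * τ) := by
  simp only [jacobiTheta₂_term, ← Complex.exp_add, Complex.exp_eq_exp_iff_exists_int]
  exact ⟨-b, by push_cast; ring⟩

lemma jacobiTheta₂_term_mul_term_add_half_swap {m n : ℤ} (h : Odd (m + n)) (z τ : ℂ) :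
    jacobiTheta₂_term n z τ * jacobiTheta₂_term m (z + 1 / 2) τ =
      -(jacobiTheta₂_term m z τ * jacobiTheta₂_term n (z + 1 / 2) τ) := by
  obtain ⟨k, hk⟩ := h
  simp only [jacobiTheta₂_term, ← Complex.exp_add]
  rw [← neg_one_mul, ← Complex.exp_pi_mul_I, ← Complex.exp_add, Complex.exp_eq_exp_iff_exists_int]
  refine ⟨k - n, ?_⟩
  rw [show (m : ℂ) = 2 * k + 1 - n by exact_mod_cast (by omega : m = 2 * k + 1 - n)]
  push_cast; ring

def evenPairsEquiv : ℤ × ℤ ≃ {p : ℤ × ℤ | Even (p.1 + p.2)} where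
  toFun p := ⟨(p.1 + p.2, p.1 - p.2), ⟨p.1, by ring⟩⟩
  invFun p := ((p.1.1 + p.1.2) / 2, (p.1.1 - p.1.2) / 2)
  left_inv p := by
    ext
    · show (p.1 + p.2 + (p.1 - p.2)) / 2 = p.1
      omega
    · show (p.1 + p.2 - (p.1 - p.2)) / 2 = p.2
      omega
  right_inv := by
    rintro ⟨⟨m, n⟩, ⟨k, hk⟩⟩
    ext
    · show (m + n) / 2 + (m - n) / 2 = m
      omega
    · show (m + n) / 2 - (m - n) / 2 = n
      omega

lemma jacobiTheta₂_mul_jacobiTheta₂_add_half (z : ℂ) {τ : ℂ} (hτ : 0 < τ.im) :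
    jacobiTheta₂ z τ * jacobiTheta₂ (z + 1 / 2) τ =
      jacobiTheta₂ (2 * z + 1 / 2) (2 * τ) * jacobiTheta₂ (1 / 2) (2 * τ) := by
  have hs : ∀ w σ, 0 < σ.im → Summable fun n ↦ ‖jacobiTheta₂_term n w σ‖ :=
    fun w σ hσ ↦ ((summable_jacobiTheta₂_term_iff w σ).2 hσ).norm
  have hτ₂ : 0 < (2 * τ).im := by simpa using hτ
  have hg := summable_mul_of_summable_norm (hs z τ hτ) (hs (z + 1 / 2) τ hτ)
  set S := {p : ℤ × ℤ | Even (p.1 + p.2)}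
  have hodd :
      ∑' p : ↥Sᶜ, jacobiTheta₂_term p.1.1 z τ * jacobiTheta₂_term p.1.2 (z + 1 / 2) τ = 0 := by
    let swap : ↥Sᶜ ≃ ↥Sᶜ := (Equiv.prodComm ℤ ℤ).subtypeEquiv fun p ↦ by simp [S, add_comm]
    have h := swap.tsum_eq fun p ↦
      jacobiTheta₂_term p.1.1 z τ * jacobiTheta₂_term p.1.2 (z + 1 / 2) τ
    rw [tsum_congr fun p ↦ jacobiTheta₂_term_mul_term_add_half_swap
      (Int.not_even_iff_odd.1 p.2) z τ, tsum_neg] at h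
    exact self_eq_neg.1 h.symm
  have heven : ∑' p : S, jacobiTheta₂_term p.1.1 z τ * jacobiTheta₂_term p.1.2 (z + 1 / 2) τ =
      jacobiTheta₂ (2 * z + 1 / 2) (2 * τ) * jacobiTheta₂ (1 / 2) (2 * τ) := by
    rw [← evenPairsEquiv.tsum_eq, jacobiTheta₂, jacobiTheta₂,
      tsum_mul_tsum_of_summable_norm (hs _ _ hτ₂) (hs _ _ hτ₂)]
    exact tsum_congr fun p ↦ jacobiTheta₂_term_add_mul_term_sub p.1 p.2 z τ
  rw [jacobiTheta₂, jacobiTheta₂, tsum_mul_tsum_of_summable_norm (hs z τ hτ) (hs _ τ hτ),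
    ← (hg.subtype S).tsum_add_tsum_compl (hg.subtype Sᶜ)]
  exact (congrArg₂ _ heven hodd).trans (add_zero _)

/-- `theta x t = ϑ₃(πx, e^{-πt})`: period `1` in `x`, nome `e^{-πt}`. -/
noncomputable def theta (x t : ℝ) : ℝ := (jacobiTheta₂ x (t * I)).re

lemma ofReal_theta (x t : ℝ) : (theta x t : ℂ) = jacobiTheta₂ x (t * I) := by
  rw [theta, ← Complex.conj_eq_iff_re, jacobiTheta₂_conj]
  simp

lemma theta_add_one (x t : ℝ) : theta (x + 1) t = theta x t := by
  rw [theta, theta, Complex.ofReal_add, Complex.ofReal_one, jacobiTheta₂_add_left]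

variable {t : ℝ}

lemma theta_mul_theta_add_half (x : ℝ) (ht : 0 < t) :
    theta x t * theta (x + 1 / 2) t = theta (2 * x + 1 / 2) (2 * t) * theta (1 / 2) (2 * t) := by
  apply Complex.ofReal_injective
  push_cast [ofReal_theta]
  rw [mul_assoc 2 (t : ℂ)]
  exact jacobiTheta₂_mul_jacobiTheta₂_add_half _ (by simpa using ht)

lemma continuous_theta (ht : 0 < t) : Continuous fun x ↦ theta x t := by
  refine Complex.continuous_re.comp (continuous_iff_continuousAt.2 fun x ↦ ?_)
  exact (continuousAt_jacobiTheta₂ x (τ := t * I) (by simpa using ht)).comp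
    (f := fun x : ℝ ↦ ((x : ℂ), (t : ℂ) * I))
    (Complex.continuous_ofReal.prodMk continuous_const).continuousAt

lemma hasSum_theta (x : ℝ) (ht : 0 < t) :
    HasSum (fun n : ℤ ↦ rexp (-π * t * n ^ 2) * cos (2 * π * n * x)) (theta x t) := by
  convert Complex.hasSum_re (hasSum_jacobiTheta₂_term x (τ := t * I) (by simpa using ht)) using 1
  · ext n
    rw [jacobiTheta₂_term, show 2 * π * I * n * x + π * I * n ^ 2 * (t * I) =
      ((-π * t * n ^ 2 : ℝ) : ℂ) + ((2 * π * n * x : ℝ) : ℂ) * I by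
        push_cast; linear_combination (π * t * n ^ 2 : ℂ) * Complex.I_sq]
    rw [Complex.exp_add, ← Complex.ofReal_exp, Complex.re_ofReal_mul, Complex.exp_ofReal_mul_I_re]
  · rfl

lemma theta_eq_one_add_two_mul_tsum (x : ℝ) (ht : 0 < t) :
    theta x t = 1 + 2 * ∑' k : ℕ, rexp (-π * t) ^ (k + 1) ^ 2 * cos (2 * π * (k + 1) * x) := by
  have heven : Function.Even fun n : ℤ ↦ rexp (-π * t * n ^ 2) * cos (2 * π * n * x) := by
    intro n
    simp only [Int.cast_neg, neg_sq, mul_neg, neg_mul, Real.cos_neg]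
  rw [← (hasSum_theta x ht).tsum_eq, tsum_int_eq_zero_add_two_mul_tsum_pnat heven
    (hasSum_theta x ht).summable, tsum_pnat_eq_tsum_succ
    (f := fun k : ℕ ↦ rexp (-π * t * (k : ℤ) ^ 2) * cos (2 * π * (k : ℤ) * x)), nsmul_eq_mul]
  congr 3
  · simp
  ext k
  rw [← Real.exp_nat_mul]
  push_cast
  ring_nf

lemma abs_sin_nat_mul_le (n : ℕ) (x : ℝ) : |sin (n * x)| ≤ n * |sin x| := by
  induction n with
  | zero => simp
  | succ n ih =>
    rw [Nat.cast_succ, add_mul, one_mul, Real.sin_add, add_mul, one_mul]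
    refine (abs_add_le _ _).trans (add_le_add ?_ ?_) <;> rw [abs_mul]
    · exact (mul_le_of_le_one_right (abs_nonneg _) (Real.abs_cos_le_one x)).trans ih
    · exact mul_le_of_le_one_left (abs_nonneg _) (Real.abs_cos_le_one _)

lemma sin_nat_mul_sq_le (n : ℕ) (x : ℝ) : sin (n * x) ^ 2 ≤ n ^ 2 * sin x ^ 2 := by
  simpa only [sq_abs, mul_pow] using pow_le_pow_left₀ (abs_nonneg _) (abs_sin_nat_mul_le n x) 2

lemma cos_nat_mul_pi_add_sub (n : ℕ) (x : ℝ) :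
    cos (n * π + 2 * (n * x)) - cos (n * π) = -2 * cos (n * π) * sin (n * x) ^ 2 := by
  rw [Real.cos_add, Real.sin_nat_mul_pi, Real.cos_two_mul]
  linear_combination 2 * cos (n * π) * Real.sin_sq_add_cos_sq (n * x)

section Nome

variable {q : ℝ}

lemma abs_pow_succ_sq_mul_le (hq0 : 0 ≤ q) (hq1 : q ≤ 1) {c : ℝ} (hc : |c| ≤ 1) (k : ℕ) :
    |q ^ (k + 1) ^ 2 * c| ≤ q * q ^ k := by
  rw [abs_mul, abs_of_nonneg (by positivity), ← pow_succ']
  exact mul_le_of_le_one_right (by positivity) hc |>.trans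
    (pow_le_pow_of_le_one hq0 hq1 (Nat.le_self_pow two_ne_zero _))

lemma summable_pow_succ_sq_mul_cos (hq0 : 0 ≤ q) (hq1 : q < 1) (f : ℕ → ℝ) :
    Summable fun k : ℕ ↦ q ^ (k + 1) ^ 2 * cos (f k) :=
  .of_norm_bounded ((summable_geometric_of_lt_one hq0 hq1).mul_left q)
    fun k ↦ abs_pow_succ_sq_mul_le hq0 hq1.le (Real.abs_cos_le_one _) k

lemma sq_mul_pow_sq_le (hq0 : 0 ≤ q) (hq1 : q ≤ 1) (k : ℕ) :
    ((k : ℝ) + 2) ^ 2 * q ^ (k + 2) ^ 2 ≤ (4 * q ^ 4) ^ (k + 1) := by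
  have h₁ : ((k : ℝ) + 2) ^ 2 ≤ 4 ^ (k + 1) := by
    have : (k : ℝ) + 2 ≤ 2 ^ (k + 1) := by exact_mod_cast Nat.lt_two_pow_self (n := k + 1)
    calc ((k : ℝ) + 2) ^ 2 ≤ (2 ^ (k + 1)) ^ 2 := pow_le_pow_left₀ (by positivity) this 2
      _ = 4 ^ (k + 1) := by rw [← pow_mul, mul_comm, pow_mul]; norm_num
  have h₂ : q ^ (k + 2) ^ 2 ≤ (q ^ 4) ^ (k + 1) := by
    rw [← pow_mul]
    exact pow_le_pow_of_le_one hq0 hq1 (by nlinarith)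
  rw [mul_pow]
  exact mul_le_mul h₁ h₂ (by positivity) (by positivity)

end Nome

lemma exp_neg_pi_mul_lt_one (ht : 0 < t) : rexp (-π * t) < 1 :=
  Real.exp_lt_one_iff.2 (by nlinarith [Real.pi_pos])

lemma theta_le_theta_zero (x : ℝ) (ht : 0 < t) : theta x t ≤ theta 0 t := by
  have hq0 := (Real.exp_pos (-π * t)).le
  have hq1 := exp_neg_pi_mul_lt_one ht
  rw [theta_eq_one_add_two_mul_tsum x ht, theta_eq_one_add_two_mul_tsum 0 ht]
  have hle : ∀ k : ℕ, rexp (-π * t) ^ (k + 1) ^ 2 * cos (2 * π * (k + 1) * x) ≤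
      rexp (-π * t) ^ (k + 1) ^ 2 * cos (2 * π * (k + 1) * 0) := fun k ↦ by
    rw [mul_zero, Real.cos_zero, mul_one]
    exact mul_le_of_le_one_right (pow_nonneg hq0 _) (Real.cos_le_one _)
  have := (summable_pow_succ_sq_mul_cos hq0 hq1 _).tsum_le_tsum hle
    (summable_pow_succ_sq_mul_cos hq0 hq1 _)
  linarith

lemma one_le_theta_zero (ht : 0 < t) : 1 ≤ theta 0 t := by
  rw [theta_eq_one_add_two_mul_tsum 0 ht]
  simp only [mul_zero, Real.cos_zero, mul_one, le_add_iff_nonneg_right]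
  exact mul_nonneg zero_le_two (tsum_nonneg fun k ↦ by positivity)

lemma theta_pos_of_exp_le (x : ℝ) (ht : 0 < t) (hq : rexp (-π * t) ≤ 1 / 4) : 0 < theta x t := by
  set q := rexp (-π * t)
  have hq0 : 0 ≤ q := (Real.exp_pos _).le
  have hq1 : q < 1 := by linarith
  have htail := tsum_of_norm_bounded ((hasSum_geometric_of_lt_one hq0 hq1).mul_left q)
    (f := fun k : ℕ ↦ q ^ (k + 1) ^ 2 * cos (2 * π * (k + 1) * x))
    fun k ↦ abs_pow_succ_sq_mul_le hq0 hq1.le (Real.abs_cos_le_one _) k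
  have hq' : q * (1 - q)⁻¹ ≤ 1 / 3 := by
    rw [← div_eq_mul_inv, div_le_iff₀ (by linarith)]
    linarith
  rw [theta_eq_one_add_two_mul_tsum x ht]
  linarith [neg_abs_le (∑' k : ℕ, q ^ (k + 1) ^ 2 * cos (2 * π * (k + 1) * x)),
    (Real.norm_eq_abs _).symm.trans_le htail]

lemma theta_half_le_of_exp_le (x : ℝ) (ht : 0 < t) (hq : rexp (-π * t) ≤ 1 / 4) :
    theta (1 / 2) t ≤ theta x t := by
  set q := rexp (-π * t)
  have hq0 : 0 ≤ q := (Real.exp_pos _).le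
  have hq1 : q < 1 := by linarith
  set ε := π * x - π / 2
  -- `ϑ(x) - ϑ(1/2) = 2 ∑ d k`; the term `d 0 = 2q sin² ε` dominates because `sin² (nε) ≤ n² sin² ε`.
  set d : ℕ → ℝ := fun k ↦ -2 * q ^ (k + 1) ^ 2 * cos ((k + 1 : ℕ) * π) *
    sin ((k + 1 : ℕ) * ε) ^ 2
  have hd : ∀ k : ℕ, q ^ (k + 1) ^ 2 * cos (2 * π * (k + 1) * x) -
      q ^ (k + 1) ^ 2 * cos (2 * π * (k + 1) * (1 / 2)) = d k := by
    intro k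
    rw [← mul_sub, show 2 * π * (k + 1) * x = (k + 1 : ℕ) * π + 2 * ((k + 1 : ℕ) * ε) by
      push_cast; ring, show 2 * π * (k + 1) * (1 / 2) = (k + 1 : ℕ) * π by push_cast; ring,
      cos_nat_mul_pi_add_sub]
    ring
  have hx := summable_pow_succ_sq_mul_cos hq0 hq1 fun k ↦ 2 * π * (k + 1) * x
  have hh := summable_pow_succ_sq_mul_cos hq0 hq1 fun k ↦ 2 * π * (k + 1) * (1 / 2)
  have hdiff : theta x t - theta (1 / 2) t = 2 * ∑' k, d k := by
    rw [theta_eq_one_add_two_mul_tsum x ht, theta_eq_one_add_two_mul_tsum _ ht,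
      ← tsum_congr hd, hx.tsum_sub hh]
    ring
  have hd₀ : d 0 = 2 * q * sin ε ^ 2 := by simp [d]
  have hbound : ∀ k : ℕ, ‖d (k + 1)‖ ≤ 2 * sin ε ^ 2 * (4 * q ^ 4) * (4 * q ^ 4) ^ k := by
    intro k
    have hsin := sin_nat_mul_sq_le (k + 2) ε
    push_cast at hsin
    calc ‖d (k + 1)‖
        = 2 * q ^ (k + 2) ^ 2 * |cos ((k + 2 : ℕ) * π)| * sin ((k + 2 : ℝ) * ε) ^ 2 := by
          simp only [d, Real.norm_eq_abs, abs_mul, abs_neg, abs_two, abs_pow, sq_abs,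
            abs_of_nonneg hq0]
          push_cast
          ring_nf
      _ ≤ 2 * q ^ (k + 2) ^ 2 * 1 * (((k : ℝ) + 2) ^ 2 * sin ε ^ 2) := by
          gcongr
          exact Real.abs_cos_le_one _
      _ = 2 * sin ε ^ 2 * (((k : ℝ) + 2) ^ 2 * q ^ (k + 2) ^ 2) := by ring
      _ ≤ 2 * sin ε ^ 2 * (4 * q ^ 4) ^ (k + 1) := by
          gcongr
          exact sq_mul_pow_sq_le hq0 hq1.le k
      _ = 2 * sin ε ^ 2 * (4 * q ^ 4) * (4 * q ^ 4) ^ k := by ring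
  have hr : 4 * q ^ 4 ≤ q / 16 := by
    have : q ^ 3 ≤ (1 / 4) ^ 3 := pow_le_pow_left₀ hq0 hq 3
    nlinarith
  have htail := tsum_of_norm_bounded ((hasSum_geometric_of_lt_one (by positivity)
    (by linarith : 4 * q ^ 4 < 1)).mul_left (2 * sin ε ^ 2 * (4 * q ^ 4))) hbound
  have hratio : 4 * q ^ 4 * (1 - 4 * q ^ 4)⁻¹ ≤ q := by
    rw [← div_eq_mul_inv, div_le_iff₀ (by linarith)]
    nlinarith
  have hs : 0 ≤ 2 * sin ε ^ 2 := by positivity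
  have := mul_le_mul_of_nonneg_left hratio hs
  rw [(hx.sub hh).congr hd |>.tsum_eq_zero_add, hd₀] at hdiff
  linarith [neg_abs_le (∑' k, d (k + 1)), (Real.norm_eq_abs _).symm.trans_le htail]

def IsPosMinAtHalf (t : ℝ) : Prop := 0 < theta (1 / 2) t ∧ ∀ x, theta (1 / 2) t ≤ theta x t

lemma isPosMinAtHalf_of_two_mul (ht : 0 < t) (h : IsPosMinAtHalf (2 * t)) : IsPosMinAtHalf t := by
  obtain ⟨hpos₂, hmin₂⟩ := h
  have hzero : 0 < theta 0 t := one_pos.trans_le (one_le_theta_zero ht)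
  have h0 : theta 0 t * theta (1 / 2) t = theta (1 / 2) (2 * t) * theta (1 / 2) (2 * t) := by
    have := theta_mul_theta_add_half 0 ht
    rwa [mul_zero, zero_add] at this
  have hprod : ∀ x, theta 0 t * theta (1 / 2) t ≤ theta x t * theta (x + 1 / 2) t := fun x ↦ by
    rw [h0, theta_mul_theta_add_half x ht]
    exact mul_le_mul_of_nonneg_right (hmin₂ _) hpos₂.le
  have hhalf : 0 < theta (1 / 2) t :=
    pos_of_mul_pos_right (h0 ▸ mul_pos hpos₂ hpos₂) hzero.le
  have hne : ∀ x, theta x t ≠ 0 := fun x hx ↦ by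
    have := hprod x
    rw [hx, zero_mul] at this
    exact (mul_pos hzero hhalf).not_ge this
  have hposx : ∀ x, 0 < theta x t := by
    intro x
    by_contra! hx
    obtain ⟨y, hy⟩ := intermediate_value_univ x 0 (continuous_theta ht) ⟨hx, hzero.le⟩
    exact hne y hy
  refine ⟨hhalf, fun x ↦ le_of_mul_le_mul_right ?_ (hposx (x + 1 / 2))⟩
  calc theta (1 / 2) t * theta (x + 1 / 2) t ≤ theta 0 t * theta (1 / 2) t := by
        rw [mul_comm]
        exact mul_le_mul_of_nonneg_right (theta_le_theta_zero _ ht) hhalf.le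
    _ ≤ theta x t * theta (x + 1 / 2) t := hprod x

lemma isPosMinAtHalf (ht : 0 < t) : IsPosMinAtHalf t := by
  have hdescent : ∀ m : ℕ, ∀ t > 0, rexp (-π * t) ^ 2 ^ m ≤ 1 / 4 → IsPosMinAtHalf t := by
    intro m
    induction m with
    | zero =>
      intro t ht hq
      rw [pow_zero, pow_one] at hq
      exact ⟨theta_pos_of_exp_le _ ht hq, fun x ↦ theta_half_le_of_exp_le x ht hq⟩
    | succ m ih =>
      intro t ht hq
      refine isPosMinAtHalf_of_two_mul ht (ih (2 * t) (by positivity) ?_)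
      have hsq : rexp (-π * (2 * t)) = rexp (-π * t) ^ 2 := by
        rw [← Real.exp_nat_mul]
        push_cast
        ring_nf
      rwa [hsq, ← pow_mul, ← pow_succ']
  have hq1 := exp_neg_pi_mul_lt_one ht
  obtain ⟨m, hm⟩ := exists_pow_lt_of_lt_one (by norm_num : (0 : ℝ) < 1 / 4) hq1
  refine hdescent m t ht (lt_of_le_of_lt ?_ hm).le
  exact pow_le_pow_of_le_one (Real.exp_pos _).le hq1.le Nat.lt_two_pow_self.le

lemma ofReal_zpow_sq_mul_exp_eq_jacobiTheta₂_term {c : ℝ} (hc : 0 < c) (n : ℤ) (z : ℝ) :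
    (c : ℂ) ^ (n ^ 2) * Complex.exp (2 * n * I * z) =
      jacobiTheta₂_term n (z / π : ℝ) ((-Real.log c / π : ℝ) * I) := by
  have hπ : (π : ℂ) ≠ 0 := Complex.ofReal_ne_zero.2 Real.pi_ne_zero
  have hc' : (c : ℂ) = Complex.exp (Real.log c) := by rw [← Complex.ofReal_exp, Real.exp_log hc]
  rw [jacobiTheta₂_term, hc', ← Complex.exp_int_mul, ← Complex.exp_add]
  congr 1
  push_cast
  field_simp
  linear_combination (n : ℂ) ^ 2 * (Real.log c : ℂ) * Complex.I_sq

end JacobiTheta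

open JacobiTheta

theorem jacobi_theta_properties (c : ℝ) (hc : c ∈ Set.Ioo (0 : ℝ) 1) :
    let θ : ℝ → ℂ := fun z => ∑' n : ℤ, ((c : ℂ)) ^ (n ^ 2) * Complex.exp (2 * (n : ℂ) * Complex.I * (z : ℂ))
    (∀ z : ℝ, θ (z + Real.pi) = θ z) ∧
    (∀ z : ℝ, (θ z).im = 0) ∧
    (∀ z : ℝ, 0 < (θ (Real.pi / 2)).re ∧ (θ (Real.pi / 2)).re ≤ (θ z).re ∧ (θ z).re ≤ (θ 0).re) := by
  intro θ
  obtain ⟨hc₀, hc₁⟩ := hc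
  set t := -Real.log c / π
  have ht : 0 < t := div_pos (neg_pos.2 (Real.log_neg hc₀ hc₁)) Real.pi_pos
  have hθ : ∀ z, θ z = theta (z / π) t := fun z ↦ by
    rw [ofReal_theta]
    exact tsum_congr fun n ↦ ofReal_zpow_sq_mul_exp_eq_jacobiTheta₂_term hc₀ n z
  obtain ⟨hpos, hmin⟩ := isPosMinAtHalf ht
  refine ⟨fun z ↦ ?_, fun z ↦ by rw [hθ, Complex.ofReal_im], fun z ↦ ?_⟩
  · rw [hθ, hθ, add_div, div_self Real.pi_ne_zero, theta_add_one]
  · have hhalf : π / 2 / π = 1 / 2 := by field_simp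
    simp only [hθ, Complex.ofReal_re, zero_div, hhalf]
    exact ⟨hpos, hmin _, theta_le_theta_zero _ ht⟩
end
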